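/- arXiv:2308.06446 — 3 statements merged into one kernel-verified Lean document; each statement's English description precedes it below -/
import Mathlib

section
/- For all natural numbers m and n with n ≥ 1, and for every k with k + 1 < m·n, the vertices f(k) and f(k+1) are adjacent in the grid graph G(m,n); consequently the boustrophedon enumeration is a Hamiltonian path of G(m,n). -/
/-- The boustrophedon (S-rule) enumeration of the `m × n` grid of vertices:
the `k`-th vertex visited is in row `k / n`; even-indexed rows are read
left-to-right and odd-indexed rows right-to-left. -/
def bous (m n : ℕ) (hn : 1 ≤ n) (k : Fin (m * n)) : Fin m × Fin n :=
  if Even ((k : ℕ) / n) then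
    (⟨(k : ℕ) / n, Nat.div_lt_of_lt_mul (Nat.mul_comm m n ▸ k.isLt)⟩, ⟨(k : ℕ) % n, Nat.mod_lt _ hn⟩)
  else
    (⟨(k : ℕ) / n, Nat.div_lt_of_lt_mul (Nat.mul_comm m n ▸ k.isLt)⟩,
     ⟨n - 1 - (k : ℕ) % n, by omega⟩)

/-- The grid graph `G(m,n)` on `Fin m × Fin n`: `(a,b)` and `(c,d)` are adjacent
iff (`a = c` and `|b − d| = 1`) or (`b = d` and `|a − c| = 1`); equivalently, the
box product of the path graphs `pathGraph m` and `pathGraph n`. -/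
def gridGraph (m n : ℕ) : SimpleGraph (Fin m × Fin n) :=
  (SimpleGraph.pathGraph m).boxProd (SimpleGraph.pathGraph n)

/-!
Two consecutive indices `k, k + 1` either lie in the same row, where the reading direction
moves the column by one, or `k` ends its row; then `k + 1` starts the next row, which is read
in the opposite direction and hence starts in the same column. Since the row `k / n` and the
position `k % n` within it determine `k`, the enumeration is injective, and it is bijective
because both sides have `m * n` elements.
-/

namespace Nat

theorem add_one_div_mod_of_mod_add_one_lt {k n : ℕ} (h : k % n + 1 < n) :
    (k + 1) / n = k / n ∧ (k + 1) % n = k % n + 1 :=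
  (Nat.div_mod_unique (by omega)).2 ⟨by have := mod_add_div k n; omega, h⟩

theorem add_one_div_mod_of_mod_add_one_eq {k n : ℕ} (h : k % n + 1 = n) :
    (k + 1) / n = k / n + 1 ∧ (k + 1) % n = 0 :=
  (Nat.div_mod_unique (by omega)).2
    ⟨by have := mod_add_div k n; rw [mul_succ]; omega, by omega⟩

end Nat

open SimpleGraph

section Boustrophedon

variable {m n : ℕ} (hn : 1 ≤ n)

theorem bous_fst_val (k : Fin (m * n)) : ((bous m n hn k).1 : ℕ) = k / n := by
  unfold bous; split_ifs <;> rfl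

theorem bous_snd_val (k : Fin (m * n)) :
    ((bous m n hn k).2 : ℕ) = if Even ((k : ℕ) / n) then k % n else n - 1 - k % n := by
  unfold bous; split_ifs <;> rfl

theorem bous_adj_bous_succ (k : ℕ) (hk : k + 1 < m * n) :
    (gridGraph m n).Adj (bous m n hn ⟨k, Nat.lt_of_succ_lt hk⟩) (bous m n hn ⟨k + 1, hk⟩) := by
  simp only [gridGraph, boxProd_adj, pathGraph_adj, Fin.ext_iff, bous_fst_val, bous_snd_val]
  obtain hmid | hend : k % n + 1 < n ∨ k % n + 1 = n := by have := Nat.mod_lt k hn; omega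
  · obtain ⟨hdiv, hmod⟩ := Nat.add_one_div_mod_of_mod_add_one_lt hmid
    rw [hdiv, hmod]
    split_ifs <;> omega
  · obtain ⟨hdiv, hmod⟩ := Nat.add_one_div_mod_of_mod_add_one_eq hend
    rw [hdiv, hmod]
    by_cases he : Even (k / n) <;> simp only [he, Nat.even_add_one, not_true, not_false_eq_true,
      if_true, if_false, true_or, true_and] <;> omega

theorem bous_injective : Function.Injective (bous m n hn) := by
  intro a b hab
  have hrow : (a : ℕ) / n = b / n := by
    simpa only [bous_fst_val] using congrArg (fun v => (v.1 : ℕ)) hab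
  have hcol := congrArg (fun v => (v.2 : ℕ)) hab
  simp only [bous_snd_val, hrow] at hcol
  have hmod : (a : ℕ) % n = b % n := by
    have := Nat.mod_lt a hn; have := Nat.mod_lt b hn
    split_ifs at hcol <;> omega
  exact Fin.ext (by rw [← Nat.div_add_mod a n, ← Nat.div_add_mod b n, hrow, hmod])

end Boustrophedon

/-- For all `m, n` with `n ≥ 1` and every `k` with `k + 1 < m·n`, the vertices
`f(k)` and `f(k+1)` of the boustrophedon enumeration are adjacent in the grid
graph `G(m,n)`; consequently (together with bijectivity) the boustrophedon
enumeration is a Hamiltonian path of `G(m,n)`. -/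
theorem bous_consecutive_adj (m n : ℕ) (hn : 1 ≤ n) :
    (∀ k : ℕ, ∀ hk : k + 1 < m * n,
      (gridGraph m n).Adj (bous m n hn ⟨k, by omega⟩) (bous m n hn ⟨k + 1, hk⟩)) ∧
    Function.Bijective (bous m n hn) :=
  ⟨bous_adj_bous_succ hn,
    (Fintype.bijective_iff_injective_and_card _).2 ⟨bous_injective hn, by simp⟩⟩
end

section
/- For all natural numbers m, n ≥ 2, any two unit cells that are consecutive in the completion-time order (i.e., cells c and c' such that no cell has completion time strictly between T(c) and T(c'), with T(c) < T(c')) are adjacent in the cell grid graph G(m−1, n−1); that is, the S-rule room sequence is a Hamiltonian path on the array of rooms in which consecutive rooms share a common edge of the grid. -/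
/-- The position (time) at which the vertex `v` is visited by the
boustrophedon enumeration, i.e. `f⁻¹ v` as a natural number. -/
noncomputable def bousInv (m n : ℕ) (hn : 1 ≤ n) (v : Fin m × Fin n) : ℕ :=
  haveI : Nonempty (Fin (m * n)) := ⟨⟨0, Nat.mul_pos v.1.pos v.2.pos⟩⟩
  (Function.invFun (bous m n hn) v : Fin (m * n)).val

/-- The completion time `T(i,j)` of the unit cell (room) `(i,j)`
(with `i < m - 1`, `j < n - 1`): the maximum of `f⁻¹` over its four corners
`(i,j)`, `(i+1,j)`, `(i,j+1)`, `(i+1,j+1)`.  This encodes the S-rule's setting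
that a room is traversed exactly when the last vertex of its contour is. -/
noncomputable def cellTime (m n : ℕ) (hn : 1 ≤ n) (i j : ℕ)
    (hi : i < m - 1) (hj : j < n - 1) : ℕ :=
  max
    (max (bousInv m n hn (⟨i, by omega⟩, ⟨j, by omega⟩))
         (bousInv m n hn (⟨i + 1, by omega⟩, ⟨j, by omega⟩)))
    (max (bousInv m n hn (⟨i, by omega⟩, ⟨j + 1, by omega⟩))
         (bousInv m n hn (⟨i + 1, by omega⟩, ⟨j + 1, by omega⟩)))

lemma bous_inj (m n : ℕ) (hn : 1 ≤ n) : Function.Injective (bous m n hn) := by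
  intro k k' h
  unfold bous at h
  have hd := Nat.div_add_mod (k : ℕ) n
  have hd' := Nat.div_add_mod (k' : ℕ) n
  have hm : (k : ℕ) % n < n := Nat.mod_lt _ hn
  have hm' : (k' : ℕ) % n < n := Nat.mod_lt _ hn
  by_cases hp : Even ((k : ℕ) / n) <;> by_cases hp' : Even ((k' : ℕ) / n) <;>
    simp [hp, hp', Prod.ext_iff, Fin.ext_iff] at h <;>
    [skip; (exact absurd (h.1 ▸ hp) hp'); (exact absurd (h.1 ▸ hp') hp); skip] <;>
  · obtain ⟨h1, h2⟩ := h
    have : (k : ℕ) = (k' : ℕ) := by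
      rw [← hd, ← hd', h1]
      omega
    exact Fin.ext this

lemma bousInv_eq (m n : ℕ) (hn : 1 ≤ n) (a b : ℕ) (ha : a < m) (hb : b < n) :
    bousInv m n hn (⟨a, ha⟩, ⟨b, hb⟩) =
      if Even a then a * n + b else a * n + (n - 1 - b) := by
  set r : ℕ := if Even a then b else n - 1 - b with hr
  have hrn : r < n := by rw [hr]; split <;> omega
  have hk : a * n + r < m * n := by
    calc a * n + r < a * n + n := by omega
    _ = (a + 1) * n := by ring
    _ ≤ m * n := Nat.mul_le_mul_right n (by omega)
  have hdiv : (a * n + r) / n = a := by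
    rw [Nat.add_comm, Nat.add_mul_div_right _ _ (by omega : 0 < n), Nat.div_eq_of_lt hrn,
      Nat.zero_add]
  have hmod : (a * n + r) % n = r := by
    rw [Nat.add_comm, Nat.add_mul_mod_self_right, Nat.mod_eq_of_lt hrn]
  have key : bous m n hn ⟨a * n + r, hk⟩ = (⟨a, ha⟩, ⟨b, hb⟩) := by
    unfold bous
    by_cases hp : Even a <;> simp only [hdiv, hmod, hp, if_pos, if_neg, Prod.ext_iff, Fin.ext_iff] <;>
      simp [hp, hr] <;> omega
  haveI : Nonempty (Fin (m * n)) := ⟨⟨0, Nat.mul_pos (by omega) (by omega)⟩⟩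
  have : Function.invFun (bous m n hn) (⟨a, ha⟩, ⟨b, hb⟩) = ⟨a * n + r, hk⟩ := by
    rw [← key, Function.leftInverse_invFun (bous_inj m n hn)]
  unfold bousInv
  rw [this]
  simp [hr]
  split <;> rfl

def Tt (n a b : ℕ) : ℕ := if Even a then (a + 2) * n - 1 - b else (a + 1) * n + b + 1

lemma Tt_decomp (n a b : ℕ) (hb : b < n - 1) :
    ∃ r, 1 ≤ r ∧ r ≤ n - 1 ∧ Tt n a b = (a + 1) * n + r := by
  have e : (a + 2) * n = (a + 1) * n + n := by ring
  unfold Tt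
  split
  · exact ⟨n - 1 - b, by omega, by omega, by omega⟩
  · exact ⟨b + 1, by omega, by omega, by omega⟩

lemma rowcol (n : ℕ) {x y r s : ℕ} (hr : r < n) (hs : s < n)
    (h : x * n + r = y * n + s) : x = y ∧ r = s := by
  have hx : (x * n + r) / n = x := by
    rw [Nat.add_comm, Nat.add_mul_div_right _ _ (by omega : 0 < n), Nat.div_eq_of_lt hr,
      Nat.zero_add]
  have hy : (y * n + s) / n = y := by
    rw [Nat.add_comm, Nat.add_mul_div_right _ _ (by omega : 0 < n), Nat.div_eq_of_lt hs,
      Nat.zero_add]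
  have hxy : x = y := by rw [← hx, ← hy, h]
  subst hxy
  exact ⟨rfl, by omega⟩

lemma Tt_inj (n a b a' b' : ℕ) (hb : b < n - 1) (hb' : b' < n - 1)
    (h : Tt n a b = Tt n a' b') : a = a' ∧ b = b' := by
  obtain ⟨r, hr1, hr2, hr3⟩ := Tt_decomp n a b hb
  obtain ⟨s, hs1, hs2, hs3⟩ := Tt_decomp n a' b' hb'
  have h' := h
  rw [hr3, hs3] at h'
  obtain ⟨haa, hrs⟩ := rowcol n (by omega) (by omega) h'
  have haa' : a = a' := by omega
  subst haa'
  refine ⟨rfl, ?_⟩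
  unfold Tt at h
  have e : (a + 2) * n = (a + 1) * n + n := by ring
  split at h <;> omega

lemma Tt_comb (m n i j i' j' : ℕ) (hm : 2 ≤ m) (hn : 2 ≤ n)
    (hi : i < m - 1) (hj : j < n - 1) (hi' : i' < m - 1) (hj' : j' < n - 1)
    (hlt : Tt n i j < Tt n i' j')
    (key : ∀ a b, a < m - 1 → b < n - 1 → ¬ (Tt n i j < Tt n a b ∧ Tt n a b < Tt n i' j')) :
    (i = i' ∧ (j = j' + 1 ∨ j' = j + 1)) ∨ (j = j' ∧ i' = i + 1) := by
  have e1 : (i + 2) * n = (i + 1) * n + n := by ring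
  have e2 : (i + 3) * n = (i + 1) * n + n + n := by ring
  -- whether (i,j) is last in its row in time order
  by_cases hEi : Even i
  · have hT : Tt n i j = (i + 2) * n - 1 - j := by unfold Tt; rw [if_pos hEi]
    by_cases hj0 : 0 < j
    · -- successor is (i, j-1)
      have hTc : Tt n i (j - 1) = Tt n i j + 1 := by
        unfold Tt; rw [if_pos hEi, if_pos hEi]; omega
      have h2 := key i (j - 1) hi (by omega)
      push_neg at h2
      have h3 : Tt n i' j' ≤ Tt n i (j - 1) := h2 (by omega)
      have h4 : Tt n i' j' = Tt n i (j - 1) := by omega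
      obtain ⟨ha, hb⟩ := Tt_inj n i' j' i (j - 1) hj' (by omega) h4
      exact Or.inl ⟨ha.symm, Or.inl (by omega)⟩
    · -- j = 0, last in row
      have hj0' : j = 0 := by omega
      subst hj0'
      obtain ⟨r, hr1, hr2, hr3⟩ := Tt_decomp n i' j' hj'
      by_cases hlast : i = m - 2
      · -- global max: contradiction
        exfalso
        have hle : (i' + 1) * n + r ≤ (i + 1) * n + n - 1 := by
          have : (i' + 1) * n ≤ (i + 1) * n := Nat.mul_le_mul_right n (by omega)
          omega
        omega
      · -- successor is (i+1, 0)
        have hOdd : ¬ Even (i + 1) := by simp [Nat.even_add_one, hEi]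
        have hTc : Tt n (i + 1) 0 = (i + 2) * n + 1 := by
          unfold Tt; rw [if_neg hOdd]
        have hne : Tt n i' j' ≠ (i + 2) * n := by
          intro hcon
          rw [hr3] at hcon
          have : (i' + 1) * n + r = (i + 1) * n + n := by omega
          have := rowcol n (show r < n by omega) (show n - n < n by omega)
            (by omega : (i' + 1) * n + r = (i + 2) * n + (n - n))
          omega
        have hge : (i + 2) * n + 1 ≤ Tt n i' j' := by omega
        have h2 := key (i + 1) 0 (by omega) (by omega)
        push_neg at h2
        have h3 : Tt n i' j' ≤ Tt n (i + 1) 0 := h2 (by omega)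
        have h4 : Tt n i' j' = Tt n (i + 1) 0 := by omega
        obtain ⟨ha, hb⟩ := Tt_inj n i' j' (i + 1) 0 hj' (by omega) h4
        exact Or.inr ⟨by omega, by omega⟩
  · have hT : Tt n i j = (i + 1) * n + j + 1 := by unfold Tt; rw [if_neg hEi]
    by_cases hjlt : j < n - 2
    · -- successor is (i, j+1)
      have hTc : Tt n i (j + 1) = Tt n i j + 1 := by
        unfold Tt; rw [if_neg hEi, if_neg hEi]; omega
      have h2 := key i (j + 1) hi (by omega)
      push_neg at h2
      have h3 : Tt n i' j' ≤ Tt n i (j + 1) := h2 (by omega)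
      have h4 : Tt n i' j' = Tt n i (j + 1) := by omega
      obtain ⟨ha, hb⟩ := Tt_inj n i' j' i (j + 1) hj' (by omega) h4
      exact Or.inl ⟨ha.symm, Or.inr (by omega)⟩
    · have hje : j = n - 2 := by omega
      subst hje
      obtain ⟨r, hr1, hr2, hr3⟩ := Tt_decomp n i' j' hj'
      by_cases hlast : i = m - 2
      · exfalso
        have hle : (i' + 1) * n + r ≤ (i + 1) * n + n - 1 := by
          have : (i' + 1) * n ≤ (i + 1) * n := Nat.mul_le_mul_right n (by omega)
          omega
        omega
      · have hEv : Even (i + 1) := by simpa [Nat.even_add_one] using hEi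
        have e2' : (i + 1 + 2) * n = (i + 1) * n + n + n := by ring
        have hTc : Tt n (i + 1) (n - 2) = (i + 2) * n + 1 := by
          unfold Tt; rw [if_pos hEv]; omega
        have hne : Tt n i' j' ≠ (i + 2) * n := by
          intro hcon
          rw [hr3] at hcon
          have := rowcol n (show r < n by omega) (show n - n < n by omega)
            (by omega : (i' + 1) * n + r = (i + 2) * n + (n - n))
          omega
        have hge : (i + 2) * n + 1 ≤ Tt n i' j' := by omega
        have h2 := key (i + 1) (n - 2) (by omega) (by omega)
        push_neg at h2
        have h3 : Tt n i' j' ≤ Tt n (i + 1) (n - 2) := h2 (by omega)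
        have h4 : Tt n i' j' = Tt n (i + 1) (n - 2) := by omega
        obtain ⟨ha, hb⟩ := Tt_inj n i' j' (i + 1) (n - 2) hj' (by omega) h4
        exact Or.inr ⟨by omega, by omega⟩


lemma cellTime_eq (m n : ℕ) (hn : 1 ≤ n) (i j : ℕ) (hi : i < m - 1) (hj : j < n - 1) :
    cellTime m n hn i j hi hj = Tt n i j := by
  unfold cellTime
  rw [bousInv_eq, bousInv_eq, bousInv_eq, bousInv_eq]
  have e1 : (i + 1) * n = i * n + n := by ring
  have e2 : (i + 2) * n = i * n + n + n := by ring
  by_cases hp : Even i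
  · have hp1 : ¬ Even (i + 1) := by simp [Nat.even_add_one, hp]
    simp only [if_pos hp, if_neg hp1]
    unfold Tt
    rw [if_pos hp]
    omega
  · have hp1 : Even (i + 1) := by simpa [Nat.even_add_one] using hp
    simp only [if_neg hp, if_pos hp1]
    unfold Tt
    rw [if_neg hp]
    omega

/-- For all `m, n ≥ 2`, any two unit cells that are consecutive in the
completion-time order (no cell has completion time strictly between them)
are adjacent in the cell grid graph `G(m−1, n−1)`: the S-rule room sequence
is a Hamiltonian path on the array of rooms in which consecutive rooms share
a common edge of the grid. -/
theorem cellTime_consecutive_adj (m n : ℕ) (hm : 2 ≤ m) (hn : 2 ≤ n)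
    (i j i' j' : ℕ) (hi : i < m - 1) (hj : j < n - 1)
    (hi' : i' < m - 1) (hj' : j' < n - 1)
    (hlt : cellTime m n (by omega) i j hi hj < cellTime m n (by omega) i' j' hi' hj')
    (hconsec : ∀ a b : ℕ, ∀ ha : a < m - 1, ∀ hb : b < n - 1,
      ¬ (cellTime m n (by omega) i j hi hj < cellTime m n (by omega) a b ha hb ∧
         cellTime m n (by omega) a b ha hb < cellTime m n (by omega) i' j' hi' hj')) :
    (gridGraph (m - 1) (n - 1)).Adj (⟨i, hi⟩, ⟨j, hj⟩) (⟨i', hi'⟩, ⟨j', hj'⟩) := by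
  have key : ∀ a b : ℕ, a < m - 1 → b < n - 1 →
      ¬ (Tt n i j < Tt n a b ∧ Tt n a b < Tt n i' j') := by
    intro a b ha hb
    have h := hconsec a b ha hb
    rwa [cellTime_eq, cellTime_eq, cellTime_eq] at h
  rw [cellTime_eq, cellTime_eq] at hlt
  have hc := Tt_comb m n i j i' j' hm hn hi hj hi' hj' hlt key
  simp only [gridGraph, SimpleGraph.boxProd_adj, SimpleGraph.pathGraph_adj, Prod.ext_iff,
    Fin.ext_iff]
  rcases hc with ⟨h1, h2 | h2⟩ | ⟨h1, h2⟩
  · exact Or.inr ⟨Or.inr (by omega), by omega⟩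
  · exact Or.inr ⟨Or.inl (by omega), by omega⟩
  · exact Or.inl ⟨Or.inl (by omega), by omega⟩
end

section
/- Let G be a finite tree and let w be a closed walk in G that traverses each edge of G exactly twice; for each edge e let I(e) = {p(e), q(e)} with p(e) < q(e) be the two step-positions of w at which e is traversed. Then the family of intervals [p(e), q(e)] is laminar (noncrossing): for any two distinct edges e and e', the intervals [p(e), q(e)] and [p(e'), q(e')] are either disjoint or one is strictly contained in the other; in particular it never happens that p(e) < p(e') < q(e) < q(e'). -/
/-!
Delete the edge `e = s(a, b)`: since a tree is acyclic, `e` is a bridge, so the vertices split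
into those reachable from `a` without using `e` and the rest. Along the walk this side changes
exactly at the two steps `p < q` traversing `e`, so after `i` steps the walk is on its starting
side iff `i ≤ p ∨ q < i`. Both traversals of `e' ≠ e` start on the same side, as the endpoints
of `e'` are joined without `e`; hence `p'` and `q'` lie both inside or both outside `(p, q]`,
which is the noncrossing property.
-/

namespace List

variable {α : Type*} [DecidableEq α] {l : List α} {a : α}

theorem count_take_lt_count_take_of_getElem? {i j : ℕ} (hij : i < j) (hi : l[i]? = some a) :
    (l.take i).count a < (l.take j).count a := by
  obtain ⟨hlt, rfl⟩ := getElem?_eq_some_iff.mp hi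
  calc (l.take i).count l[i] < (l.take (i + 1)).count l[i] := by
        rw [count_getElem_take_succ]; exact Nat.lt_succ_self _
    _ ≤ (l.take j).count l[i] := (take_sublist_take_left hij).count_le _

theorem three_le_count_of_getElem? {i j k : ℕ} (hij : i < j) (hjk : j < k)
    (hi : l[i]? = some a) (hj : l[j]? = some a) (hk : l[k]? = some a) : 3 ≤ l.count a := by
  have h1 := count_take_lt_count_take_of_getElem? hij hi
  have h2 := count_take_lt_count_take_of_getElem? hjk hj
  have h3 : (l.take k).count a < l.count a := by
    simpa using count_take_lt_count_take_of_getElem? (getElem?_eq_some_iff.mp hk).1 hk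
  omega

theorem eq_or_eq_of_count_eq_two {p q j : ℕ} (h2 : l.count a = 2) (hpq : p < q)
    (hp : l[p]? = some a) (hq : l[q]? = some a) (hj : l[j]? = some a) : j = p ∨ j = q := by
  by_contra! hne
  rcases lt_trichotomy j p with hjp | rfl | hpj
  · have := three_le_count_of_getElem? hjp hpq hj hp hq; omega
  · exact hne.1 rfl
  rcases lt_trichotomy j q with hjq | rfl | hqj
  · have := three_le_count_of_getElem? hpj hjq hp hj hq; omega
  · exact hne.2 rfl
  · have := three_le_count_of_getElem? hpq hqj hp hq hj; omega

end List

theorem iff_apply_zero_iff_of_toggles {T : ℕ → Prop} {p q : ℕ} (hpq : p < q)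
    (hstay : ∀ j, j ≠ p → j ≠ q → (T (j + 1) ↔ T j))
    (hp : T (p + 1) ↔ ¬T p) (hq : T (q + 1) ↔ ¬T q) (i : ℕ) :
    (T i ↔ T 0) ↔ (i ≤ p ∨ q < i) := by
  induction i with
  | zero => simp
  | succ i ih =>
    by_cases hip : i = p
    · subst hip
      have hi : T i ↔ T 0 := ih.mpr (Or.inl le_rfl)
      have hfalse : ¬(i + 1 ≤ i ∨ q < i + 1) := by omega
      tauto
    by_cases hiq : i = q
    · subst hiq
      have hi : ¬(T i ↔ T 0) := fun h => by have := ih.mp h; omega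
      have htrue : i + 1 ≤ p ∨ i < i + 1 := by omega
      tauto
    have hiff : (i ≤ p ∨ q < i) ↔ (i + 1 ≤ p ∨ q < i + 1) := by omega
    rw [hstay i hip hiq, ih, hiff]

namespace SimpleGraph.Walk

variable {V : Type*} {G : SimpleGraph V} {u v : V} (w : G.Walk u v) {e f : Sym2 V}

theorem mk_getVert_eq_of_getElem?_edges {j : ℕ} (h : w.edges[j]? = some f) :
    s(w.getVert j, w.getVert (j + 1)) = f := by
  obtain ⟨hlt, rfl⟩ := List.getElem?_eq_some_iff.mp h
  exact (getElem_edges hlt).symm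

theorem reachable_deleteEdges_getVert_succ {j : ℕ} (h : w.edges[j]? ≠ some e) :
    (G.deleteEdges {e}).Reachable (w.getVert j) (w.getVert (j + 1)) := by
  by_cases hj : j < w.length
  · have hedge : w.edges[j]? = some s(w.getVert j, w.getVert (j + 1)) :=
      List.getElem?_eq_some_iff.mpr ⟨by simpa using hj, getElem_edges _⟩
    refine Adj.reachable (deleteEdges_adj.mpr ⟨w.adj_getVert_succ hj, ?_⟩)
    rintro rfl
    exact h hedge
  · rw [w.getVert_of_length_le (by omega), w.getVert_of_length_le (by omega)]

theorem reachable_deleteEdges_getVert_of_getElem?_edges {i j : ℕ} (hi : w.edges[i]? = some f)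
    (hj : w.edges[j]? = some f) (hfe : f ≠ e) :
    (G.deleteEdges {e}).Reachable (w.getVert i) (w.getVert j) := by
  have hij := (w.mk_getVert_eq_of_getElem?_edges hi).trans
    (w.mk_getVert_eq_of_getElem?_edges hj).symm
  rcases Sym2.eq_iff.mp hij with ⟨hij, -⟩ | ⟨hij, -⟩
  · rw [hij]
  · rw [hij]
    exact (w.reachable_deleteEdges_getVert_succ (by rw [hj]; simpa using hfe)).symm

theorem reachable_deleteEdges_getVert_succ_iff_of_isBridge {a b : V} (hb : G.IsBridge s(a, b))
    {j : ℕ} (h : w.edges[j]? = some s(a, b)) :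
    (G.deleteEdges {s(a, b)}).Reachable a (w.getVert (j + 1)) ↔
      ¬(G.deleteEdges {s(a, b)}).Reachable a (w.getVert j) := by
  have hab : ¬(G.deleteEdges {s(a, b)}).Reachable a b := isBridge_iff.mp hb
  rcases Sym2.eq_iff.mp (w.mk_getVert_eq_of_getElem?_edges h) with ⟨h1, h2⟩ | ⟨h1, h2⟩ <;>
    simp [h1, h2, hab]

end SimpleGraph.Walk

open SimpleGraph in
theorem tree_walk_intervals_laminar_general {V : Type*} [DecidableEq V]
    (G : SimpleGraph V) (hG : G.IsTree) (r : V) (w : G.Walk r r)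
    (htwice : ∀ e ∈ G.edgeSet, w.edges.count e = 2)
    (e e' : Sym2 V) (hne : e ≠ e')
    (p q p' q' : ℕ) (hpq : p < q)
    (hp : w.edges[p]? = some e) (hq : w.edges[q]? = some e)
    (hp' : w.edges[p']? = some e') (hq' : w.edges[q']? = some e') :
    (q < p' ∨ q' < p) ∨ (p < p' ∧ q' < q) ∨ (p' < p ∧ q < q') := by
  obtain ⟨a, b⟩ := e
  have he : s(a, b) ∈ G.edgeSet := w.edges_subset_edgeSet (List.mem_of_getElem? hp)
  have hbridge : G.IsBridge s(a, b) := isAcyclic_iff_forall_adj_isBridge.mp hG.isAcyclic he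
  set T : ℕ → Prop := fun i => (G.deleteEdges {s(a, b)}).Reachable a (w.getVert i)
  have hstay : ∀ j, j ≠ p → j ≠ q → (T (j + 1) ↔ T j) := fun j hjp hjq => by
    have hj : w.edges[j]? ≠ some s(a, b) := fun hj => by
      rcases List.eq_or_eq_of_count_eq_two (htwice _ he) hpq hp hq hj with h | h <;> contradiction
    have := w.reachable_deleteEdges_getVert_succ hj
    exact ⟨fun h => h.trans this.symm, fun h => h.trans this⟩
  have hside := iff_apply_zero_iff_of_toggles hpq hstay
    (w.reachable_deleteEdges_getVert_succ_iff_of_isBridge hbridge hp)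
    (w.reachable_deleteEdges_getVert_succ_iff_of_isBridge hbridge hq)
  have hsame : T p' ↔ T q' := by
    have := w.reachable_deleteEdges_getVert_of_getElem?_edges hp' hq' (Ne.symm hne)
    exact ⟨fun h => h.trans this, fun h => h.trans this.symm⟩
  have hboth := (hside p').symm.trans ((iff_congr hsame Iff.rfl).trans (hside q'))
  have hdistinct : ∀ {i j : ℕ}, w.edges[i]? = some s(a, b) → w.edges[j]? = some e' → i ≠ j := by
    rintro i j hi hj rfl
    exact hne (Option.some_injective _ (hi.symm.trans hj))
  have := hdistinct hp hp'; have := hdistinct hp hq'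
  have := hdistinct hq hp'; have := hdistinct hq hq'
  omega

/-- Let `G` be a finite tree and `w` a closed walk in `G` that traverses each
edge of `G` exactly twice.  For distinct edges `e` and `e'`, if `p < q` are the
two step-positions of `w` at which `e` is traversed (i.e. the positions in the
list `w.edges` holding `e`), and likewise `p' < q'` for `e'`, then the
intervals `[p, q]` and `[p', q']` are either disjoint or one is strictly
contained in the other; in particular they never cross
(`p < p' < q < q'` never happens). -/
theorem tree_walk_intervals_laminar {V : Type*} [Fintype V] [DecidableEq V]
    (G : SimpleGraph V) (hG : G.IsTree) (r : V) (w : G.Walk r r)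
    (htwice : ∀ e ∈ G.edgeSet, w.edges.count e = 2)
    (e e' : Sym2 V) (he : e ∈ G.edgeSet) (he' : e' ∈ G.edgeSet) (hne : e ≠ e')
    (p q p' q' : ℕ) (hpq : p < q) (hpq' : p' < q')
    (hp : w.edges[p]? = some e) (hq : w.edges[q]? = some e)
    (hp' : w.edges[p']? = some e') (hq' : w.edges[q']? = some e') :
    (q < p' ∨ q' < p) ∨ (p < p' ∧ q' < q) ∨ (p' < p ∧ q < q') :=
  tree_walk_intervals_laminar_general G hG r w htwice e e' hne p q p' q' hpq hp hq hp' hq'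
end
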